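/- Let A and B be lattices with least elements. Then the box product A^d □ B^d of the dual lattices, ordered by inclusion, is order-isomorphic to the dual of the lattice A ⊠ B; explicitly, the map Y ↦ Y^▽ is a bijection from A^d □ B^d onto A ⊠ B that reverses inclusion, and it sends each pure box ⋂_{i<n}(a_i □^d b_i) of A^d □ B^d to the join ⋁_{i<n}(a_i ⊠ b_i) computed in A ⊠ B. -/

import Mathlib

/-- The pure box `a □ b = {⟨x,y⟩ : x ≤ a or y ≤ b}`. -/
def pureBox {A B : Type*} [Lattice A] [Lattice B] (a : A) (b : B) : Set (A × B) :=
  {p : A × B | p.1 ≤ a ∨ p.2 ≤ b}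

/-- `a ∘ b = {⟨x,y⟩ : x ≤ a and y ≤ b}`. -/
def pureCirc {A B : Type*} [Lattice A] [Lattice B] (a : A) (b : B) : Set (A × B) :=
  {p : A × B | p.1 ≤ a ∧ p.2 ≤ b}

/-- The box product `A □ B`: all finite (nonempty) intersections of pure boxes. -/
def BoxProd (A B : Type*) [Lattice A] [Lattice B] : Set (Set (A × B)) :=
  {H | ∃ (n : ℕ) (a : Fin (n + 1) → A) (b : Fin (n + 1) → B),
    H = ⋂ i, pureBox (a i) (b i)}

/-- `A ⊡ B`: all finite unions of pure boxes (at least one) and pure circles. -/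
def BoxDot (A B : Type*) [Lattice A] [Lattice B] : Set (Set (A × B)) :=
  {H | ∃ (m n : ℕ) (a : Fin (m + 1) → A) (b : Fin (m + 1) → B)
      (c : Fin n → A) (d : Fin n → B),
    H = (⋃ i, pureBox (a i) (b i)) ∪ ⋃ j, pureCirc (c j) (d j)}

/-- The box closure of a subset of `A × B`: intersection of all pure boxes containing it. -/
def BoxCl {A B : Type*} [Lattice A] [Lattice B] (X : Set (A × B)) : Set (A × B) :=
  ⋂ (a : A) (b : B) (_ : X ⊆ pureBox a b), pureBox a b

/-- The pure lattice tensor `a ⊠ b = (a ∘ b) ∪ ⊥_{A,B}`, where `⊥_{A,B}` consists of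
the pairs one of whose coordinates is a least element. -/
def pureTens {A B : Type*} [Lattice A] [Lattice B] (a : A) (b : B) : Set (A × B) :=
  pureCirc a b ∪ {p : A × B | IsBot p.1 ∨ IsBot p.2}

/-- A subset of `A × B` is confined if it is contained in some pure lattice tensor. -/
def Confined {A B : Type*} [Lattice A] [Lattice B] (X : Set (A × B)) : Prop :=
  ∃ (a : A) (b : B), X ⊆ pureTens a b

/-- The lattice tensor product `A ⊠ B`: all confined elements of `A □ B`. -/
def LatTens (A B : Type*) [Lattice A] [Lattice B] : Set (Set (A × B)) :=
  {H | H ∈ BoxProd A B ∧ Confined H}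

/-- `X^△ = {⟨a,b⟩ : ⟨x,y⟩ ◁ ⟨a,b⟩ for all ⟨x,y⟩ ∈ X}` where `⟨x,y⟩ ◁ ⟨a,b⟩` iff
`x ≤ a` or `y ≤ b`. -/
def trUp {A B : Type*} [Lattice A] [Lattice B] (X : Set (A × B)) : Set (A × B) :=
  {p : A × B | ∀ q ∈ X, q.1 ≤ p.1 ∨ q.2 ≤ p.2}

/-- `X^▽ = {⟨a,b⟩ : ⟨a,b⟩ ◁ ⟨x,y⟩ for all ⟨x,y⟩ ∈ X}`. -/
def trDown {A B : Type*} [Lattice A] [Lattice B] (X : Set (A × B)) : Set (A × B) :=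
  {p : A × B | ∀ q ∈ X, p.1 ≤ q.1 ∨ p.2 ≤ q.2}

/-- The dual pure box `a □ᵈ b`, i.e. the pure box formed in `Aᵈ × Bᵈ`. -/
def pureBoxD {A B : Type*} [Lattice A] [Lattice B] (a : A) (b : B) : Set (A × B) :=
  {p : A × B | a ≤ p.1 ∨ b ≤ p.2}

/-- The box product `Aᵈ □ Bᵈ` of the dual lattices (as a family of subsets
of `A × B`): all finite nonempty intersections of dual pure boxes. -/
def BoxProdD (A B : Type*) [Lattice A] [Lattice B] : Set (Set (A × B)) :=
  {H | ∃ (n : ℕ) (a : Fin (n + 1) → A) (b : Fin (n + 1) → B),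
    H = ⋂ i, pureBoxD (a i) (b i)}


/-! With `◁` the relation `BoxRel`, `X^▽` and `X^△` are the lower and upper polars of `X`
along `◁`. Pure boxes are extents, and `(a ⊠ b)^△ = a □ᵈ b` shows that
`⋂ᵢ aᵢ □ᵈ bᵢ = (⋃ᵢ aᵢ ⊠ bᵢ)^△` is an intent. So `Y ↦ Y^▽` is injective and reverses inclusion
on `Aᵈ □ Bᵈ`, it sends `⋂ᵢ aᵢ □ᵈ bᵢ` to the box closure of `⋃ᵢ aᵢ ⊠ bᵢ`, and each `X ∈ A ⊠ B`
is the image of `X^△`.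

Both polars stay inside the box products because the index set can be split into `S` and its
complement: `(⋂ᵢ aᵢ □ᵈ bᵢ)^▽ = ⋂_S (⋁_{i ∈ S} aᵢ) □ (⋁_{i ∉ S} bᵢ)`, and if `X = ⋂ᵢ aᵢ □ bᵢ`
lies in `c ⊠ d` then `X = ⋃_S (c ⊓ ⋀_{i ∈ S} aᵢ) ⊠ (d ⊓ ⋀_{i ∉ S} bᵢ)`, whose upper polar is
a finite intersection of dual pure boxes. Confinement of `(⋂ᵢ aᵢ □ᵈ bᵢ)^▽` comes from
`(a □ᵈ b)^▽ = a ⊠ b` with `a = ⋁ᵢ aᵢ`, `b = ⋁ᵢ bᵢ`. -/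

open Order

def BoxRel {A B : Type*} [LE A] [LE B] (p q : A × B) : Prop :=
  p.1 ≤ q.1 ∨ p.2 ≤ q.2

section

variable {A B : Type*} [Lattice A] [Lattice B]

theorem trDown_eq_lowerPolar (X : Set (A × B)) : trDown X = lowerPolar BoxRel X :=
  rfl

theorem trUp_eq_upperPolar (X : Set (A × B)) : trUp X = upperPolar BoxRel X :=
  rfl

theorem pureBox_eq_lowerPolar (a : A) (b : B) : pureBox a b = lowerPolar BoxRel {(a, b)} := by
  ext p
  rw [mem_lowerPolar_singleton]
  rfl

theorem boxCl_eq_lowerPolar_upperPolar (X : Set (A × B)) :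
    BoxCl X = lowerPolar BoxRel (upperPolar BoxRel X) := by
  ext p
  simp only [BoxCl, Set.mem_iInter, mem_lowerPolar_iff, mem_upperPolar_iff, Set.subset_def]
  exact ⟨fun h q hq => h q.1 q.2 hq, fun h a b hab => @h (a, b) hab⟩

theorem upperPolar_pureTens (a : A) (b : B) :
    upperPolar BoxRel (pureTens a b) = pureBoxD a b := by
  ext q
  refine ⟨fun h => h (show (a, b) ∈ pureTens a b from Or.inl ⟨le_rfl, le_rfl⟩), ?_⟩
  rintro h p (⟨h₁, h₂⟩ | hp | hp)
  · exact h.imp h₁.trans h₂.trans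
  · exact Or.inl (hp q.1)
  · exact Or.inr (hp q.2)

theorem lowerPolar_pureBoxD (a : A) (b : B) :
    lowerPolar BoxRel (pureBoxD a b) = pureTens a b := by
  refine subset_antisymm (fun p hp => ?_) ?_
  · have h₁ (x : A) : p.1 ≤ x ∨ p.2 ≤ b := hp (show (x, b) ∈ pureBoxD a b from Or.inr le_rfl)
    have h₂ (y : B) : p.1 ≤ a ∨ p.2 ≤ y := hp (show (a, y) ∈ pureBoxD a b from Or.inl le_rfl)
    by_cases ha : p.1 ≤ a
    · by_cases hb : p.2 ≤ b
      · exact Or.inl ⟨ha, hb⟩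
      · exact Or.inr (Or.inl fun x => (h₁ x).resolve_right hb)
    · exact Or.inr (Or.inr fun y => (h₂ y).resolve_left ha)
  · rw [← upperPolar_pureTens]
    exact subset_lowerPolar_upperPolar BoxRel _

theorem pureTens_subset_pureBox_iff {x a : A} {y b : B} :
    pureTens x y ⊆ pureBox a b ↔ x ≤ a ∨ y ≤ b := by
  rw [pureBox_eq_lowerPolar, ← subset_upperPolar_iff_subset_lowerPolar, upperPolar_pureTens,
    Set.singleton_subset_iff]
  rfl

theorem iInter_pureBoxD_eq_upperPolar {ι : Sort*} (a : ι → A) (b : ι → B) :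
    ⋂ i, pureBoxD (a i) (b i) = upperPolar BoxRel (⋃ i, pureTens (a i) (b i)) := by
  simp only [upperPolar_iUnion, upperPolar_pureTens]

theorem isIntent_of_mem_boxProdD {Y : Set (A × B)} (hY : Y ∈ BoxProdD A B) :
    IsIntent BoxRel Y := by
  obtain ⟨n, a, b, rfl⟩ := hY
  rw [iInter_pureBoxD_eq_upperPolar]
  exact isIntent_upperPolar

theorem isExtent_of_mem_boxProd {X : Set (A × B)} (hX : X ∈ BoxProd A B) :
    IsExtent BoxRel X := by
  obtain ⟨n, a, b, rfl⟩ := hX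
  refine IsExtent.iInter _ fun i => ?_
  rw [pureBox_eq_lowerPolar]
  exact isExtent_lowerPolar

theorem exists_surjective_fin_succ (ι : Type*) [Finite ι] [Nonempty ι] :
    ∃ (n : ℕ) (e : Fin (n + 1) → ι), e.Surjective := by
  obtain ⟨n, hn⟩ := Nat.exists_eq_add_one_of_ne_zero (Finite.card_pos (α := ι)).ne'
  exact ⟨n, (Finite.equivFinOfCardEq hn).symm, Equiv.surjective _⟩

theorem iInter_pureBox_mem_boxProd {ι : Type*} [Finite ι] [Nonempty ι] (a : ι → A)
    (b : ι → B) : ⋂ i, pureBox (a i) (b i) ∈ BoxProd A B := by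
  obtain ⟨n, e, he⟩ := exists_surjective_fin_succ ι
  exact ⟨n, a ∘ e, b ∘ e, (he.iInter_comp fun i => pureBox (a i) (b i)).symm⟩

theorem iInter_pureBoxD_mem_boxProdD {ι : Type*} [Finite ι] [Nonempty ι] (a : ι → A)
    (b : ι → B) : ⋂ i, pureBoxD (a i) (b i) ∈ BoxProdD A B := by
  obtain ⟨n, e, he⟩ := exists_surjective_fin_succ ι
  exact ⟨n, a ∘ e, b ∘ e, (he.iInter_comp fun i => pureBoxD (a i) (b i)).symm⟩

theorem lowerPolar_iInter_pureBoxD [OrderBot A] [OrderBot B] {ι : Type*} [Fintype ι]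
    [DecidableEq ι] (a : ι → A) (b : ι → B) :
    lowerPolar BoxRel (⋂ i, pureBoxD (a i) (b i)) =
      ⋂ S : Finset ι, pureBox (S.sup a) (Sᶜ.sup b) := by
  ext p
  simp only [Set.mem_iInter, mem_lowerPolar_iff]
  constructor
  · intro hp S
    refine @hp (S.sup a, Sᶜ.sup b) fun i => ?_
    by_cases hi : i ∈ S
    · exact Or.inl (Finset.le_sup hi)
    · exact Or.inr (Finset.le_sup (Finset.mem_compl.2 hi))
  · classical
    intro hp q hq
    let S := Finset.univ.filter fun i => a i ≤ q.1
    have h₁ : S.sup a ≤ q.1 := Finset.sup_le fun i hi => (Finset.mem_filter.1 hi).2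
    have h₂ : Sᶜ.sup b ≤ q.2 := Finset.sup_le fun i hi =>
      (hq i).resolve_left fun h => Finset.mem_compl.1 hi (by simp [S, h])
    exact (hp S).imp (le_trans · h₁) (le_trans · h₂)

theorem iInter_pureBox_eq_iUnion_pureTens {ι : Type*} [Fintype ι] [Nonempty ι] [DecidableEq ι]
    (a : ι → A) (b : ι → B) {c : A} {d : B}
    (hcd : ⋂ i, pureBox (a i) (b i) ⊆ pureTens c d) :
    ⋂ i, pureBox (a i) (b i) = ⋃ S : Finset ι,
      pureTens (Finset.univ.inf' Finset.univ_nonempty fun i => if i ∈ S then a i ⊓ c else c)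
        (Finset.univ.inf' Finset.univ_nonempty fun i => if i ∈ S then d else b i ⊓ d) := by
  classical
  refine subset_antisymm (fun p hp => ?_) ?_
  · rcases hcd hp with ⟨hc, hd⟩ | hbot
    · have hp' := Set.mem_iInter.1 hp
      refine Set.mem_iUnion.2 ⟨Finset.univ.filter fun i => p.1 ≤ a i, Or.inl ⟨?_, ?_⟩⟩
      · refine Finset.le_inf' _ _ fun i _ => ?_
        split_ifs with hi
        · exact le_inf (Finset.mem_filter.1 hi).2 hc
        · exact hc
      · refine Finset.le_inf' _ _ fun i _ => ?_
        split_ifs with hi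
        · exact hd
        · exact le_inf ((hp' i).resolve_left fun h => hi (by simp [h])) hd
    · exact Set.mem_iUnion.2 ⟨∅, Or.inr hbot⟩
  · refine Set.iUnion_subset fun S => Set.subset_iInter fun i => pureTens_subset_pureBox_iff.2 ?_
    by_cases hi : i ∈ S
    · refine Or.inl ((Finset.inf'_le _ (Finset.mem_univ i)).trans ?_)
      simp only [hi, if_true, inf_le_left]
    · refine Or.inr ((Finset.inf'_le _ (Finset.mem_univ i)).trans ?_)
      simp only [hi, if_false, inf_le_left]

theorem trDown_mem_latTens [OrderBot A] [OrderBot B] {Y : Set (A × B)}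
    (hY : Y ∈ BoxProdD A B) : trDown Y ∈ LatTens A B := by
  obtain ⟨n, a, b, rfl⟩ := hY
  refine ⟨?_, Finset.univ.sup a, Finset.univ.sup b, ?_⟩
  · rw [trDown_eq_lowerPolar, lowerPolar_iInter_pureBoxD]
    exact iInter_pureBox_mem_boxProd _ _
  · rw [← lowerPolar_pureBoxD]
    refine lowerPolar_anti BoxRel (Set.subset_iInter fun i => ?_)
    exact fun q hq => hq.imp (le_trans (Finset.le_sup (Finset.mem_univ i)))
      (le_trans (Finset.le_sup (Finset.mem_univ i)))

theorem trUp_mem_boxProdD {X : Set (A × B)} (hX : X ∈ LatTens A B) :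
    trUp X ∈ BoxProdD A B := by
  obtain ⟨⟨n, a, b, rfl⟩, c, d, hcd⟩ := hX
  rw [iInter_pureBox_eq_iUnion_pureTens a b hcd, trUp_eq_upperPolar,
    ← iInter_pureBoxD_eq_upperPolar]
  exact iInter_pureBoxD_mem_boxProdD _ _

end

/-- `Aᵈ □ Bᵈ` is isomorphic to the dual of `A ⊠ B` via `Y ↦ Y^▽`, which maps each
pure box `⋂ (a_i □ᵈ b_i)` to the join `⋁ (a_i ⊠ b_i)` computed in `A ⊠ B`. -/
theorem stmt_11 {A B : Type*} [Lattice A] [OrderBot A] [Lattice B] [OrderBot B] :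
    Set.BijOn trDown (BoxProdD A B) (LatTens A B) ∧
    (∀ Y₁ ∈ BoxProdD A B, ∀ Y₂ ∈ BoxProdD A B,
      Y₁ ⊆ Y₂ ↔ trDown Y₂ ⊆ trDown Y₁) ∧
    ∀ (n : ℕ) (a : Fin (n + 1) → A) (b : Fin (n + 1) → B),
      trDown (⋂ i, pureBoxD (a i) (b i)) = BoxCl (⋃ i, pureTens (a i) (b i)) := by
  refine ⟨⟨fun Y hY => trDown_mem_latTens hY, ?_, ?_⟩, ?_, ?_⟩
  · intro Y₁ h₁ Y₂ h₂ h
    rw [← (isIntent_of_mem_boxProdD h₁).eq, ← (isIntent_of_mem_boxProdD h₂).eq]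
    exact congrArg (upperPolar BoxRel) h
  · exact fun X hX => ⟨trUp X, trUp_mem_boxProdD hX, (isExtent_of_mem_boxProd hX.1).eq⟩
  · intro Y₁ h₁ Y₂ h₂
    refine ⟨fun h => lowerPolar_anti BoxRel h, fun h => ?_⟩
    rw [← (isIntent_of_mem_boxProdD h₁).eq, ← (isIntent_of_mem_boxProdD h₂).eq]
    exact upperPolar_anti BoxRel h
  · intro n a b
    rw [boxCl_eq_lowerPolar_upperPolar, trDown_eq_lowerPolar, iInter_pureBoxD_eq_upperPolar]
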